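/- There exist five pairwise distinct circles in the plane, not all tangent at one point, together with four pairwise distinct circles each of which is tangent to all five given circles. (Hence the bound 4 in the five-circle Apollonius theorem is attained.) -/

import Mathlib

noncomputable section

/-- The Euclidean plane. -/
abbrev Plane := EuclideanSpace ℝ (Fin 2)

/-- Two circles (center, radius) are tangent: they are distinct and the distance between
centers equals the sum (external) or the absolute difference (internal) of the radii. -/
def Tangent (A B : Plane × ℝ) : Prop :=
  A ≠ B ∧ (dist A.1 B.1 = A.2 + B.2 ∨ dist A.1 B.1 = |A.2 - B.2|)

namespace ApolloniusWitness

/-- A point of the plane from two coordinates. -/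
def pt (a b : ℝ) : Plane := WithLp.toLp 2 ![a, b]

lemma pt_dist (a b x y : ℝ) :
    dist (pt a b) (pt x y) = Real.sqrt ((a - x)^2 + (b - y)^2) := by
  rw [EuclideanSpace.dist_eq]
  simp [pt, Fin.sum_univ_two, Real.dist_eq, sq_abs]

lemma hs2 : (Real.sqrt 2) ^ 2 = 2 := Real.sq_sqrt (by norm_num)
lemma hs3 : (Real.sqrt 3) ^ 2 = 3 := Real.sq_sqrt (by norm_num)
lemma s2pos : 0 < Real.sqrt 2 := Real.sqrt_pos.mpr (by norm_num)
lemma s3pos : 0 < Real.sqrt 3 := Real.sqrt_pos.mpr (by norm_num)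
lemma s2lts3 : Real.sqrt 2 < Real.sqrt 3 := by
  apply Real.sqrt_lt_sqrt <;> norm_num

/-- External tangency from squared data. -/
lemma tang_ext (a b x y R r : ℝ) (hne : R ≠ r) (h0 : 0 ≤ R + r)
    (h : (a - x)^2 + (b - y)^2 = (R + r)^2) : Tangent (pt a b, R) (pt x y, r) := by
  refine ⟨fun he => hne (congrArg Prod.snd he), Or.inl ?_⟩
  show dist (pt a b) (pt x y) = R + r
  rw [pt_dist, h, Real.sqrt_sq h0]

/-- Internal tangency from squared data. -/
lemma tang_int (a b x y R r : ℝ) (hne : R ≠ r)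
    (h : (a - x)^2 + (b - y)^2 = (R - r)^2) : Tangent (pt a b, R) (pt x y, r) := by
  refine ⟨fun he => hne (congrArg Prod.snd he), Or.inr ?_⟩
  show dist (pt a b) (pt x y) = |R - r|
  rw [pt_dist, h, Real.sqrt_sq_eq_abs]

/-- the quantity √6/2, written ring-friendly. -/
def q : ℝ := Real.sqrt 2 * Real.sqrt 3 / 2

lemma radius_ne_big : Real.sqrt 3 ≠ Real.sqrt 3 + Real.sqrt 2 := by nlinarith [s2pos]
lemma radius_ne_small : Real.sqrt 3 ≠ Real.sqrt 3 - Real.sqrt 2 := by nlinarith [s2pos]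
lemma radius_ne_half : Real.sqrt 3 ≠ Real.sqrt 2 / 2 := by nlinarith [s2lts3, s2pos]

/-- Tangency of a corner circle with a small axis circle, internal case. -/
lemma tang_axis_int (e1 e2 u v : ℝ) (he1 : e1 ^ 2 = 1) (he2 : e2 ^ 2 = 1)
    (huv : u ^ 2 + v ^ 2 = 3 / 2)
    (hdot : e1 * u + e2 * v = Real.sqrt 2 * Real.sqrt 3 / 2) :
    Tangent (pt e1 e2, Real.sqrt 3) (pt u v, Real.sqrt 2 / 2) := by
  apply tang_int _ _ _ _ _ _ radius_ne_half
  have h2 := hs2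
  have h3 := hs3
  nlinarith [he1, he2, huv, hdot, h2, h3]

/-- Tangency of a corner circle with a small axis circle, external case. -/
lemma tang_axis_ext (e1 e2 u v : ℝ) (he1 : e1 ^ 2 = 1) (he2 : e2 ^ 2 = 1)
    (huv : u ^ 2 + v ^ 2 = 3 / 2)
    (hdot : e1 * u + e2 * v = -(Real.sqrt 2 * Real.sqrt 3 / 2)) :
    Tangent (pt e1 e2, Real.sqrt 3) (pt u v, Real.sqrt 2 / 2) := by
  apply tang_ext _ _ _ _ _ _ radius_ne_half (by positivity)
  have h2 := hs2
  have h3 := hs3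
  nlinarith [he1, he2, huv, hdot, h2, h3]

/-- Tangency of a corner circle with the big concentric circle. -/
lemma tang_corner_big (e1 e2 : ℝ) (he1 : e1 ^ 2 = 1) (he2 : e2 ^ 2 = 1) :
    Tangent (pt e1 e2, Real.sqrt 3) (pt 0 0, Real.sqrt 3 + Real.sqrt 2) := by
  apply tang_int _ _ _ _ _ _ radius_ne_big
  have h2 := hs2
  nlinarith [he1, he2, h2]

/-- Tangency of a corner circle with the small concentric circle. -/
lemma tang_corner_small (e1 e2 : ℝ) (he1 : e1 ^ 2 = 1) (he2 : e2 ^ 2 = 1) :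
    Tangent (pt e1 e2, Real.sqrt 3) (pt 0 0, Real.sqrt 3 - Real.sqrt 2) := by
  apply tang_int _ _ _ _ _ _ radius_ne_small
  have h2 := hs2
  nlinarith [he1, he2, h2]

lemma hqq : q ^ 2 + 0 ^ 2 = 3 / 2 := by
  have h2 := hs2; have h3 := hs3
  simp only [q]; nlinarith [h2, h3]

lemma hqq' : 0 ^ 2 + q ^ 2 = 3 / 2 := by
  have := hqq; linarith

lemma ne_of_radius (p p' : Plane) {R r : ℝ} (h : R ≠ r) : (p, R) ≠ (p', r) :=
  fun he => h (congrArg Prod.snd he)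

lemma ne_of_x {a b x y : ℝ} (R r : ℝ) (h : a ≠ x) : (pt a b, R) ≠ (pt x y, r) := by
  intro he
  exact h (by have := congrArg (fun z : Plane × ℝ => z.1 0) he; simpa [pt] using this)

lemma qpos : 0 < q := by
  have := s2pos; have := s3pos; simp only [q]; positivity

end ApolloniusWitness

set_option maxHeartbeats 2000000 in
open ApolloniusWitness in
/-- The bound 4 is attained: there are five pairwise distinct circles, not all tangent at
one point, with four pairwise distinct common tangent circles. -/
theorem apollonius_five_circles_sharp :
    ∃ (c : Fin 5 → Plane) (r : Fin 5 → ℝ) (d : Fin 4 → Plane) (ρ : Fin 4 → ℝ),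
      (∀ i, 0 < r i) ∧ (∀ j, 0 < ρ j) ∧
      (∀ i j, i ≠ j → (c i, r i) ≠ (c j, r j)) ∧
      (∀ i j, i ≠ j → (d i, ρ i) ≠ (d j, ρ j)) ∧
      (¬ ∃ p : Plane, (∀ i, dist p (c i) = r i) ∧
        ∀ i j, i ≠ j → Tangent (c i, r i) (c j, r j)) ∧
      (∀ j i, Tangent (d j, ρ j) (c i, r i)) := by
  have h2 := hs2
  have h3 := hs3
  have hq := qpos
  refine ⟨![pt 0 0, pt 0 0, pt q 0, pt (-q) 0, pt 0 q],
      ![Real.sqrt 3 + Real.sqrt 2, Real.sqrt 3 - Real.sqrt 2,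
        Real.sqrt 2 / 2, Real.sqrt 2 / 2, Real.sqrt 2 / 2],
      ![pt 1 1, pt 1 (-1), pt (-1) 1, pt (-1) (-1)],
      fun _ => Real.sqrt 3, ?_, ?_, ?_, ?_, ?_, ?_⟩
  · intro i
    fin_cases i <;> simp <;> nlinarith [s2pos, s3pos, s2lts3]
  · intro j; exact s3pos
  · intro i j hij
    fin_cases i <;> fin_cases j <;>
      first
        | exact absurd rfl hij
        | (intro hh
           have hc := congrArg Prod.fst hh
           have hr := congrArg Prod.snd hh
           have hx := congrArg (fun z : Plane => z 0) hc
           have hy := congrArg (fun z : Plane => z 1) hc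
           simp [pt] at hx hy hr <;>
             nlinarith [hq, s2pos, s3pos, s2lts3, h2, h3])
  · intro i j hij
    fin_cases i <;> fin_cases j <;>
      first
        | exact absurd rfl hij
        | (intro hh
           have hc := congrArg Prod.fst hh
           have hx := congrArg (fun z : Plane => z 0) hc
           have hy := congrArg (fun z : Plane => z 1) hc
           simp [pt] at hx hy <;> nlinarith [hx, hy])
  · rintro ⟨p, -, ht⟩
    have h := (ht 0 1 (by decide)).2
    simp only [Matrix.cons_val_zero, Matrix.cons_val_one, Matrix.head_cons, dist_self] at h
    rcases h with h | h
    · nlinarith [s3pos]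
    · rw [show Real.sqrt 3 + Real.sqrt 2 - (Real.sqrt 3 - Real.sqrt 2) = 2 * Real.sqrt 2 by
        ring, abs_of_pos (by positivity)] at h
      nlinarith [s2pos]
  · intro j i
    fin_cases j <;> fin_cases i <;> simp <;>
      first
        | (apply tang_corner_big <;> norm_num)
        | (apply tang_corner_small <;> norm_num)
        | (apply tang_axis_int <;>
            first | (norm_num; done) | (simp only [q] <;> ring1) | (simp only [q] <;> nlinarith [hs2, hs3]))
        | (apply tang_axis_ext <;>
            first | (norm_num; done) | (simp only [q] <;> ring1) | (simp only [q] <;> nlinarith [hs2, hs3]))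

end
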